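/- arXiv:2502.06746 — 6 statements merged into one kernel-verified Lean document; each statement's English description precedes it below -/
import Mathlib

section
/- Let X be a closed acausal subset of the pseudo-Euclidean space ℝ_{(l,p)} and let a ∈ X. Then the normal set N(a) = {x ∈ ℝ^n : Q(x−a) ≤ Q(x−b) for all b ∈ X} is a closed and convex subset of ℝ^n containing a. -/
open Filter Topology Set

noncomputable section

/-- The pseudo-Euclidean space `ℝ_{(l,p)}`: `ℝ^(l+p)` with the Euclidean topology. -/
abbrev PE (l p : ℕ) := EuclideanSpace ℝ (Fin (l + p))

/-- The quadratic form `Q(x) = ‖x‖_l² − ‖x‖_p²`. -/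
def Q (l p : ℕ) (x : PE l p) : ℝ :=
  ∑ i : Fin (l + p), if (i : ℕ) < l then (x i) ^ 2 else -((x i) ^ 2)

/-- The pseudo-scalar product `⟪x,y⟫ = Σ_{i<l} x_i y_i − Σ_{i≥l} x_i y_i`. -/
def pseudoInner (l p : ℕ) (x y : PE l p) : ℝ :=
  ∑ i : Fin (l + p), if (i : ℕ) < l then x i * y i else -(x i * y i)

/-- `‖x‖_l`: the Euclidean norm of the first `l` coordinates. -/
def normL (l p : ℕ) (x : PE l p) : ℝ :=
  Real.sqrt (∑ i : Fin (l + p), if (i : ℕ) < l then (x i) ^ 2 else 0)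

/-- `‖x‖_p`: the Euclidean norm of the last `p` coordinates. -/
def normP (l p : ℕ) (x : PE l p) : ℝ :=
  Real.sqrt (∑ i : Fin (l + p), if (i : ℕ) < l then 0 else (x i) ^ 2)

/-- `X` is acausal: `Q(x−y) > 0` for all distinct `x, y ∈ X`. -/
def Acausal (l p : ℕ) (X : Set (PE l p)) : Prop :=
  ∀ x ∈ X, ∀ y ∈ X, x ≠ y → 0 < Q l p (x - y)

/-- `X` is `L`-pseudo-Lipschitz: `L‖x−y‖_l ≥ ‖x−y‖_p` for all `x, y ∈ X`. -/
def PseudoLipschitz (l p : ℕ) (L : ℝ) (X : Set (PE l p)) : Prop :=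
  ∀ x ∈ X, ∀ y ∈ X, normP l p (x - y) ≤ L * normL l p (x - y)

/-- The squared-distance function `ρ(a,X) = inf {Q(x−a) : x ∈ X}`. -/
def rho (l p : ℕ) (X : Set (PE l p)) (a : PE l p) : ℝ :=
  sInf ((fun x => Q l p (x - a)) '' X)

/-- The set of closest points `m(a) = {x ∈ X : Q(x−a) = ρ(a,X)}`, via its equivalent
description `m(a) = {x ∈ X : ∀ b ∈ X, Q(x−a) ≤ Q(b−a)}`. -/
def mm (l p : ℕ) (X : Set (PE l p)) (a : PE l p) : Set (PE l p) :=
  {x ∈ X | ∀ b ∈ X, Q l p (x - a) ≤ Q l p (b - a)}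

/-- The medial axis `M_X`: points with at least two closest points in `X`. -/
def medialAxis (l p : ℕ) (X : Set (PE l p)) : Set (PE l p) :=
  {a | (mm l p X a).Nontrivial}

/-- The vacant axis `W_X`: points with no closest point in `X`. -/
def vacantAxis (l p : ℕ) (X : Set (PE l p)) : Set (PE l p) :=
  {a | mm l p X a = ∅}

/-- The normal set `N(a) = {x : a ∈ m(x)}`. -/
def NN (l p : ℕ) (X : Set (PE l p)) (a : PE l p) : Set (PE l p) :=
  {x | a ∈ mm l p X x}

/-- The strict normal set `N'(a) = {x : m(x) = {a}}`. -/
def NN' (l p : ℕ) (X : Set (PE l p)) (a : PE l p) : Set (PE l p) :=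
  {x | mm l p X x = {a}}

/-!
Expanding `Q`, the terms quadratic in `x` cancel in `Q(b − x) − Q(a − x)`, which is therefore
affine in `x`: `Q(b − x) − Q(a − x) = Q(b) − Q(a) − 2⟪b − a, x⟫`. Hence, for `a ∈ X`, the normal
set `N(a)` is the intersection over `b ∈ X` of the closed half-spaces
`⟪b − a, x⟫ ≤ (Q(b) − Q(a))/2`, so it is closed and convex. It contains `a` because
`Q(a − a) = 0 < Q(b − a)` for `b ≠ a` by acausality.
-/

section NormalSet

variable {l p : ℕ}

lemma isLinearMap_pseudoInner (c : PE l p) : IsLinearMap ℝ (pseudoInner l p c) where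
  map_add x y := by
    simp only [pseudoInner, PiLp.add_apply, ← Finset.sum_add_distrib]
    refine Finset.sum_congr rfl fun i _ => ?_
    split <;> ring
  map_smul t x := by
    simp only [pseudoInner, PiLp.smul_apply, smul_eq_mul, Finset.mul_sum]
    refine Finset.sum_congr rfl fun i _ => ?_
    split <;> ring

lemma continuous_pseudoInner (c : PE l p) : Continuous (pseudoInner l p c) :=
  (IsLinearMap.mk' _ (isLinearMap_pseudoInner c)).continuous_of_finiteDimensional

lemma Q_sub_self (a : PE l p) : Q l p (a - a) = 0 := by
  simp [Q]

lemma Q_sub_sub_Q_sub (a b x : PE l p) :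
    Q l p (b - x) - Q l p (a - x) = Q l p b - Q l p a - 2 * pseudoInner l p (b - a) x := by
  simp only [Q, pseudoInner, PiLp.sub_apply, Finset.mul_sum, ← Finset.sum_sub_distrib]
  refine Finset.sum_congr rfl fun i _ => ?_
  split <;> ring

lemma Q_sub_le_Q_sub_iff (a b x : PE l p) :
    Q l p (a - x) ≤ Q l p (b - x) ↔ pseudoInner l p (b - a) x ≤ (Q l p b - Q l p a) / 2 := by
  have := Q_sub_sub_Q_sub a b x
  constructor <;> intro h <;> linarith

variable {X : Set (PE l p)} {a : PE l p}

lemma NN_eq_biInter_halfSpace (ha : a ∈ X) :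
    NN l p X a = ⋂ b ∈ X, {x | pseudoInner l p (b - a) x ≤ (Q l p b - Q l p a) / 2} := by
  ext x
  simp only [NN, mm, Set.mem_ofPred_eq, Set.mem_iInter, Q_sub_le_Q_sub_iff, ha, true_and]

lemma self_mem_NN (hac : Acausal l p X) (ha : a ∈ X) : a ∈ NN l p X a := by
  refine ⟨ha, fun b hb => ?_⟩
  rw [Q_sub_self]
  rcases eq_or_ne b a with rfl | hne
  · rw [Q_sub_self]
  · exact (hac b hb a ha hne).le

lemma isClosed_NN (ha : a ∈ X) : IsClosed (NN l p X a) := by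
  rw [NN_eq_biInter_halfSpace ha]
  exact isClosed_biInter fun b _ => isClosed_le (continuous_pseudoInner _) continuous_const

lemma convex_NN (ha : a ∈ X) : Convex ℝ (NN l p X a) := by
  rw [NN_eq_biInter_halfSpace ha]
  exact convex_iInter₂ fun b _ => convex_halfSpace_le (isLinearMap_pseudoInner _) _

end NormalSet

theorem normalSet_closed_convex_general (l p : ℕ)
    (X : Set (PE l p)) (hac : Acausal l p X)
    (a : PE l p) (ha : a ∈ X) :
    a ∈ NN l p X a ∧ IsClosed (NN l p X a) ∧ Convex ℝ (NN l p X a) :=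
  ⟨self_mem_NN hac ha, isClosed_NN ha, convex_NN ha⟩

/-- For closed acausal `X` and `a ∈ X`, the normal set
`N(a) = {x : Q(x−a) ≤ Q(x−b) for all b ∈ X}` is closed, convex and contains `a`. -/
theorem normalSet_closed_convex (l p : ℕ) (hl : 1 ≤ l)
    (X : Set (PE l p)) (hX : IsClosed X) (hac : Acausal l p X)
    (a : PE l p) (ha : a ∈ X) :
    a ∈ NN l p X a ∧ IsClosed (NN l p X a) ∧ Convex ℝ (NN l p X a) :=
  normalSet_closed_convex_general l p X hac a ha
end
end

section
/- Let X be a closed acausal subset of the pseudo-Euclidean space ℝ_{(l,p)} and let a ∈ X. Then N(a) − a ⊂ N_aX, where N_aX := {w ∈ ℝ^n : ⟪w,v⟫ ≤ 0 for all v ∈ C_aX} is the pseudo-normal cone of X at a and C_aX is the tangent cone of X at a. -/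
open Filter Topology Set

noncomputable section

/-- The tangent cone `C_aX`: vectors `v` such that there are sequences `X ∋ b_ν → a`
and reals `t_ν ≥ 0` with `t_ν (b_ν − a) → v`. -/
def tangentCone' (l p : ℕ) (X : Set (PE l p)) (a : PE l p) : Set (PE l p) :=
  {v | ∃ (b : ℕ → PE l p) (t : ℕ → ℝ), (∀ ν, b ν ∈ X) ∧ (∀ ν, 0 ≤ t ν) ∧
    Tendsto b atTop (𝓝 a) ∧ Tendsto (fun ν => t ν • (b ν - a)) atTop (𝓝 v)}

/-!
If `a` minimises `b ↦ Q(b − x)` over `X`, expanding `Q(b − x) = Q((b − a) − (x − a))` gives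
`2⟪b − a, x − a⟫ ≤ Q(b − a)` for every `b ∈ X`. Scaling by `t ≥ 0` and letting `b → a` along a
sequence with `t (b − a) → v`, the right side `⟪t (b − a), b − a⟫` tends to `⟪v, 0⟫ = 0`,
so `⟪v, x − a⟫ ≤ 0`.
-/

section PseudoInner

variable {l p : ℕ}

lemma pseudoInner_comm (u z : PE l p) : pseudoInner l p u z = pseudoInner l p z u :=
  Finset.sum_congr rfl fun i _ => by split <;> ring

lemma pseudoInner_self (u : PE l p) : pseudoInner l p u u = Q l p u :=
  Finset.sum_congr rfl fun i _ => by split <;> ring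

lemma pseudoInner_smul_left (c : ℝ) (u z : PE l p) :
    pseudoInner l p (c • u) z = c * pseudoInner l p u z := by
  simp only [pseudoInner, Finset.mul_sum, PiLp.smul_apply, smul_eq_mul]
  exact Finset.sum_congr rfl fun i _ => by split <;> ring

lemma Q_sub (u z : PE l p) : Q l p (u - z) = Q l p u - 2 * pseudoInner l p u z + Q l p z := by
  simp only [Q, pseudoInner, Finset.mul_sum, ← Finset.sum_sub_distrib,
    ← Finset.sum_add_distrib, PiLp.sub_apply]
  exact Finset.sum_congr rfl fun i _ => by split <;> ring

lemma Q_sub_comm (u z : PE l p) : Q l p (u - z) = Q l p (z - u) := by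
  rw [Q_sub, Q_sub, pseudoInner_comm]
  ring

lemma Filter.Tendsto.pseudoInner {α : Type*} {F : Filter α} {f g : α → PE l p} {u z : PE l p}
    (hf : Tendsto f F (𝓝 u)) (hg : Tendsto g F (𝓝 z)) :
    Tendsto (fun n => pseudoInner l p (f n) (g n)) F (𝓝 (pseudoInner l p u z)) := by
  refine tendsto_finsetSum _ fun i _ => ?_
  have hfg := ((PiLp.continuous_apply 2 _ i).tendsto u).comp hf |>.mul
    (((PiLp.continuous_apply 2 _ i).tendsto z).comp hg)
  split
  · exact hfg
  · exact hfg.neg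

end PseudoInner

section NormalCone

variable {l p : ℕ} {X : Set (PE l p)} {a x : PE l p}

lemma two_mul_pseudoInner_le_Q_of_mem_mm (hx : a ∈ mm l p X x) {b : PE l p} (hb : b ∈ X) :
    2 * pseudoInner l p (b - a) (x - a) ≤ Q l p (b - a) := by
  have hmin : Q l p (a - x) ≤ Q l p (b - x) := hx.2 b hb
  rw [Q_sub_comm a x, ← sub_sub_sub_cancel_right b x a, Q_sub (b - a)] at hmin
  linarith

lemma pseudoInner_sub_nonpos_of_mem_mm (hx : a ∈ mm l p X x) {v : PE l p}
    (hv : v ∈ tangentCone' l p X a) : pseudoInner l p (x - a) v ≤ 0 := by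
  obtain ⟨b, t, hbX, ht, hba, htv⟩ := hv
  have hscaled : ∀ n, 2 * pseudoInner l p (t n • (b n - a)) (x - a) ≤
      pseudoInner l p (t n • (b n - a)) (b n - a) := fun n => by
    rw [pseudoInner_smul_left, pseudoInner_smul_left, pseudoInner_self, mul_left_comm]
    exact mul_le_mul_of_nonneg_left (two_mul_pseudoInner_le_Q_of_mem_mm hx (hbX n)) (ht n)
  have hdiff : Tendsto (fun n => b n - a) atTop (𝓝 0) := by
    simpa using hba.sub_const a
  have hlim : 2 * pseudoInner l p v (x - a) ≤ pseudoInner l p v 0 :=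
    le_of_tendsto_of_tendsto' ((htv.pseudoInner tendsto_const_nhds).const_mul 2)
      (htv.pseudoInner hdiff) hscaled
  have hzero : pseudoInner l p v 0 = 0 := by simp [pseudoInner]
  rw [pseudoInner_comm]
  linarith

end NormalCone

theorem normalSet_sub_subset_pseudoNormalCone_general (l p : ℕ)
    (X : Set (PE l p))
    (a : PE l p) :
    (fun x => x - a) '' NN l p X a ⊆
      {w | ∀ v ∈ tangentCone' l p X a, pseudoInner l p w v ≤ 0} := by
  rintro w ⟨x, hx, rfl⟩ v hv
  exact pseudoInner_sub_nonpos_of_mem_mm hx hv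

/-- For closed acausal `X` and `a ∈ X`, `N(a) − a` is contained in the
pseudo-normal cone `N_aX = {w : ⟪w,v⟫ ≤ 0 for all v ∈ C_aX}`. -/
theorem normalSet_sub_subset_pseudoNormalCone (l p : ℕ) (hl : 1 ≤ l)
    (X : Set (PE l p)) (hX : IsClosed X) (hac : Acausal l p X)
    (a : PE l p) (ha : a ∈ X) :
    (fun x => x - a) '' NN l p X a ⊆
      {w | ∀ v ∈ tangentCone' l p X a, pseudoInner l p w v ≤ 0} :=
  normalSet_sub_subset_pseudoNormalCone_general l p X a
end
end

section
/- Let X be a closed acausal subset of the pseudo-Euclidean space ℝ_{(l,p)} and let a ∈ X. If x ∈ N(a) and x ≠ a, then for every t ∈ [0,1) one has m(a + t(x−a)) = {a}, i.e. the half-open segment [a,x) is contained in N'(a); in particular, if x ∈ N'(a) then the closed segment [a,x] is contained in N'(a). -/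
open Filter Topology Set

noncomputable section

/-
Write `c = a + t(x - a)`. For `b ∈ X`,
`Q(b - c) = Q(b - a) - 2t⟪b - a, x - a⟫ + t²Q(x - a)` while `Q(a - c) = t²Q(x - a)`.
Minimality of `a` for `x` (the case `t = 1`) gives `2⟪b - a, x - a⟫ ≤ Q(b - a)`, hence
`Q(b - c) - Q(a - c) ≥ (1 - t) Q(b - a)`, which is positive for `b ≠ a` by acausality.
-/

namespace PE

variable {l p : ℕ}

lemma Q_sub_smul (t : ℝ) (u v : PE l p) :
    Q l p (u - t • v) = Q l p u - 2 * t * pseudoInner l p u v + t ^ 2 * Q l p v := by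
  unfold Q pseudoInner
  simp only [PiLp.sub_apply, PiLp.smul_apply, smul_eq_mul, Finset.mul_sum,
    ← Finset.sum_sub_distrib, ← Finset.sum_add_distrib]
  refine Finset.sum_congr rfl fun i _ => ?_
  split <;> ring

lemma Q_neg_smul (t : ℝ) (v : PE l p) : Q l p (-(t • v)) = t ^ 2 * Q l p v := by
  unfold Q
  simp only [PiLp.neg_apply, PiLp.smul_apply, smul_eq_mul, Finset.mul_sum]
  refine Finset.sum_congr rfl fun i _ => ?_
  split <;> ring

lemma Q_neg (v : PE l p) : Q l p (-v) = Q l p v := by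
  simpa using Q_neg_smul 1 v

variable {X : Set (PE l p)} {a x : PE l p}

lemma two_mul_pseudoInner_le_Q_of_mem_NN (hx : x ∈ NN l p X a) {b : PE l p} (hb : b ∈ X) :
    2 * pseudoInner l p (b - a) (x - a) ≤ Q l p (b - a) := by
  have hle := hx.2 b hb
  rw [← neg_sub, Q_neg, show b - x = (b - a) - (1 : ℝ) • (x - a) by
    rw [one_smul, sub_sub_sub_cancel_right], Q_sub_smul] at hle
  linarith

lemma Q_sub_lt_Q_sub_of_mem_NN (hac : Acausal l p X) (ha : a ∈ X) (hx : x ∈ NN l p X a)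
    {t : ℝ} (ht : t ∈ Ico (0 : ℝ) 1) {b : PE l p} (hb : b ∈ X) (hba : b ≠ a) :
    Q l p (a - (a + t • (x - a))) < Q l p (b - (a + t • (x - a))) := by
  have hinner := mul_le_mul_of_nonneg_left (two_mul_pseudoInner_le_Q_of_mem_NN hx hb) ht.1
  have hQ : 0 < Q l p (b - a) := hac b hb a ha hba
  rw [sub_add_eq_sub_sub, sub_self, zero_sub, Q_neg_smul, sub_add_eq_sub_sub, Q_sub_smul]
  nlinarith [ht.2]

lemma mm_eq_singleton_of_forall_Q_sub_lt {c : PE l p} (ha : a ∈ X)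
    (hlt : ∀ b ∈ X, b ≠ a → Q l p (a - c) < Q l p (b - c)) : mm l p X c = {a} := by
  ext y
  refine ⟨fun ⟨hy, hmin⟩ => ?_, ?_⟩
  · by_contra hya
    exact (hmin a ha).not_gt (hlt y hy hya)
  · rintro rfl
    refine ⟨ha, fun b hb => ?_⟩
    rcases eq_or_ne b y with rfl | hby
    · exact le_rfl
    · exact (hlt b hb hby).le

lemma add_smul_sub_mem_NN' (hac : Acausal l p X) (ha : a ∈ X) (hx : x ∈ NN l p X a)
    {t : ℝ} (ht : t ∈ Ico (0 : ℝ) 1) : a + t • (x - a) ∈ NN' l p X a :=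
  mm_eq_singleton_of_forall_Q_sub_lt ha fun _ hb hba =>
    Q_sub_lt_Q_sub_of_mem_NN hac ha hx ht hb hba

end PE

theorem segment_subset_strictNormalSet_general (l p : ℕ)
    (X : Set (PE l p)) (hac : Acausal l p X)
    (a : PE l p) (ha : a ∈ X) (x : PE l p) (hx : x ∈ NN l p X a) :
    (∀ t ∈ Set.Ico (0 : ℝ) 1, a + t • (x - a) ∈ NN' l p X a) ∧
    (x ∈ NN' l p X a → ∀ t ∈ Set.Icc (0 : ℝ) 1, a + t • (x - a) ∈ NN' l p X a) := by
  refine ⟨fun t ht => PE.add_smul_sub_mem_NN' hac ha hx ht, fun hx' t ht => ?_⟩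
  rcases ht.2.lt_or_eq with ht1 | rfl
  · exact PE.add_smul_sub_mem_NN' hac ha hx ⟨ht.1, ht1⟩
  · rwa [one_smul, add_sub_cancel]

/-- For closed acausal `X`, `a ∈ X`, `x ∈ N(a)`, `x ≠ a`: the half-open
segment `[a,x)` lies in `N'(a)`, i.e. `m(a + t(x−a)) = {a}` for all `t ∈ [0,1)`;
in particular if `x ∈ N'(a)` then the closed segment `[a,x]` lies in `N'(a)`. -/
theorem segment_subset_strictNormalSet (l p : ℕ) (hl : 1 ≤ l)
    (X : Set (PE l p)) (hX : IsClosed X) (hac : Acausal l p X)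
    (a : PE l p) (ha : a ∈ X) (x : PE l p) (hx : x ∈ NN l p X a) (hxa : x ≠ a) :
    (∀ t ∈ Set.Ico (0 : ℝ) 1, a + t • (x - a) ∈ NN' l p X a) ∧
    (x ∈ NN' l p X a → ∀ t ∈ Set.Icc (0 : ℝ) 1, a + t • (x - a) ∈ NN' l p X a) :=
  segment_subset_strictNormalSet_general l p X hac a ha x hx
end
end

section
/- Let X be a closed acausal subset of the pseudo-Euclidean space ℝ_{(l,p)} and let a ∈ X. If b_ν ∈ X is a sequence converging to a and x_ν ∈ N(b_ν) converges to some x ∈ ℝ^n, then x ∈ N(a); that is, limsup_{X ∋ b → a} N(b) ⊂ N(a). -/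
open Filter Topology Set

noncomputable section

theorem continuous_Q (l p : ℕ) : Continuous (Q l p) :=
  continuous_finsetSum _ fun _ _ => by split_ifs <;> fun_prop

theorem mem_NN_of_tendsto {l p : ℕ} {X : Set (PE l p)} {ι : Type*} {F : Filter ι} [F.NeBot]
    {a x₀ : PE l p} {b x : ι → PE l p} (ha : a ∈ X) (hba : Tendsto b F (𝓝 a))
    (hxx : Tendsto x F (𝓝 x₀)) (hx : ∀ᶠ i in F, x i ∈ NN l p X (b i)) :
    x₀ ∈ NN l p X a := by
  refine ⟨ha, fun c hc => ?_⟩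
  have hQ := continuous_Q l p
  exact le_of_tendsto_of_tendsto ((hQ.tendsto _).comp (hba.sub hxx))
    ((hQ.tendsto _).comp (tendsto_const_nhds.sub hxx)) (hx.mono fun _ hi => hi.2 c hc)

theorem limsup_normalSet_subset_general (l p : ℕ)
    (X : Set (PE l p))
    (a : PE l p) (ha : a ∈ X)
    (b : ℕ → PE l p) (hba : Tendsto b atTop (𝓝 a))
    (x : ℕ → PE l p) (hx : ∀ ν, x ν ∈ NN l p X (b ν))
    (x₀ : PE l p) (hxx : Tendsto x atTop (𝓝 x₀)) :
    x₀ ∈ NN l p X a :=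
  mem_NN_of_tendsto ha hba hxx (Eventually.of_forall hx)

/-- For closed acausal `X` and `a ∈ X`: if `X ∋ b_ν → a` and
`N(b_ν) ∋ x_ν → x`, then `x ∈ N(a)`; i.e. `limsup_{X ∋ b → a} N(b) ⊂ N(a)`. -/
theorem limsup_normalSet_subset (l p : ℕ) (hl : 1 ≤ l)
    (X : Set (PE l p)) (hX : IsClosed X) (hac : Acausal l p X)
    (a : PE l p) (ha : a ∈ X)
    (b : ℕ → PE l p) (hb : ∀ ν, b ν ∈ X) (hba : Tendsto b atTop (𝓝 a))
    (x : ℕ → PE l p) (hx : ∀ ν, x ν ∈ NN l p X (b ν))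
    (x₀ : PE l p) (hxx : Tendsto x atTop (𝓝 x₀)) :
    x₀ ∈ NN l p X a :=
  limsup_normalSet_subset_general l p X a ha b hba x hx x₀ hxx
end
end

section
/- Let X be a nonempty closed L-pseudo-Lipschitz subset of the pseudo-Euclidean space ℝ_{(l,p)} with L < 1. Then the squared-distance function ρ(·,X) : ℝ^n → ℝ is locally Lipschitz (with respect to the Euclidean norm on ℝ^n). -/
open Filter Topology Set

noncomputable section

/-! Pseudo-Lipschitz with `L < 1` makes `Q` coercive on differences of points of `X`:
`Q(x - y) ≥ c ‖x - y‖²` with `c > 0`. Fix `x₀ ∈ X` and a unit ball around `a₀`. Coercivity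
bounds `Q(· - a)` below on `X`, so `ρ` is a genuine infimum, and it makes points of `X` far
from `x₀` irrelevant to `ρ` on the ball: there `Q(x - b)` exceeds `Q(x₀ - a) ≥ ρ(a)`. The
remaining points lie in a bounded set, on which `a ↦ Q(x - a)` is uniformly Lipschitz because
`Q u - Q v = ⟪u + v, u - v⟫` for the pseudo-scalar product. -/

open scoped NNReal

lemma lipschitzOnWith_sInf_image {ι α : Type*} [PseudoMetricSpace α] {X : Set ι}
    {f : ι → α → ℝ} {s : Set α} {K : ℝ≥0} (hX : X.Nonempty)
    (hbdd : ∀ a ∈ s, BddBelow ((f · a) '' X))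
    (hle : ∀ a ∈ s, ∀ b ∈ s, ∀ x ∈ X, ∃ y ∈ X, f y a ≤ f x b + K * dist a b) :
    LipschitzOnWith K (fun a => sInf ((f · a) '' X)) s := by
  have key : ∀ a ∈ s, ∀ b ∈ s,
      sInf ((f · a) '' X) ≤ sInf ((f · b) '' X) + K * dist a b := by
    intro a ha b hb
    rw [← sub_le_iff_le_add]
    refine le_csInf (hX.image _) ?_
    rintro _ ⟨x, hx, rfl⟩
    obtain ⟨y, hy, hyx⟩ := hle a ha b hb x hx
    rw [sub_le_iff_le_add]
    exact (csInf_le (hbdd a ha) ⟨y, hy, rfl⟩).trans hyx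
  rw [lipschitzOnWith_iff_dist_le_mul]
  intro a ha b hb
  rw [Real.dist_eq, abs_sub_le_iff]
  constructor
  · linarith [key a ha b hb]
  · linarith [dist_comm a b ▸ key b hb a ha]

namespace PE

variable {l p : ℕ}

lemma normL_sq (u : PE l p) :
    normL l p u ^ 2 = ∑ i : Fin (l + p), if (i : ℕ) < l then u i ^ 2 else 0 :=
  Real.sq_sqrt (Finset.sum_nonneg fun i _ => by split <;> positivity)

lemma normP_sq (u : PE l p) :
    normP l p u ^ 2 = ∑ i : Fin (l + p), if (i : ℕ) < l then 0 else u i ^ 2 :=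
  Real.sq_sqrt (Finset.sum_nonneg fun i _ => by split <;> positivity)

lemma Q_eq_normL_sq_sub_normP_sq (u : PE l p) :
    Q l p u = normL l p u ^ 2 - normP l p u ^ 2 := by
  rw [normL_sq, normP_sq, Q, ← Finset.sum_sub_distrib]
  exact Finset.sum_congr rfl fun i _ => by split <;> ring

lemma norm_sq_eq_normL_sq_add_normP_sq (u : PE l p) :
    ‖u‖ ^ 2 = normL l p u ^ 2 + normP l p u ^ 2 := by
  rw [normL_sq, normP_sq, EuclideanSpace.norm_sq_eq, ← Finset.sum_add_distrib]
  exact Finset.sum_congr rfl fun i _ => by split <;> simp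

lemma Q_eq_pseudoInner_self (u : PE l p) : Q l p u = pseudoInner l p u u := by
  simp only [Q, pseudoInner, sq]

lemma Q_sub_Q (u v : PE l p) : Q l p u - Q l p v = pseudoInner l p (u + v) (u - v) := by
  simp only [Q, pseudoInner, PiLp.add_apply, PiLp.sub_apply, ← Finset.sum_sub_distrib]
  exact Finset.sum_congr rfl fun i _ => by split <;> ring

lemma abs_pseudoInner_le (u v : PE l p) : |pseudoInner l p u v| ≤ ‖u‖ * ‖v‖ := by
  calc |pseudoInner l p u v| ≤ ∑ i, |u i| * |v i| :=
        (Finset.abs_sum_le_sum_abs _ _).trans <|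
          Finset.sum_le_sum fun i _ => by split <;> simp [abs_mul]
    _ ≤ √(∑ i, |u i| ^ 2) * √(∑ i, |v i| ^ 2) := Real.sum_mul_le_sqrt_mul_sqrt _ _ _
    _ = ‖u‖ * ‖v‖ := by simp [EuclideanSpace.norm_eq]

lemma abs_Q_le (u : PE l p) : |Q l p u| ≤ ‖u‖ ^ 2 := by
  simpa [Q_eq_pseudoInner_self, sq] using abs_pseudoInner_le u u

lemma abs_Q_sub_Q_le (u v : PE l p) : |Q l p u - Q l p v| ≤ (‖u‖ + ‖v‖) * ‖u - v‖ := by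
  rw [Q_sub_Q]
  exact (abs_pseudoInner_le _ _).trans <|
    mul_le_mul_of_nonneg_right (norm_add_le u v) (norm_nonneg _)

lemma mul_norm_sq_le_Q_of_normP_le {L : ℝ} (hL0 : 0 ≤ L) (hL1 : L ≤ 1) {u : PE l p}
    (hu : normP l p u ≤ L * normL l p u) : (1 - L ^ 2) / 2 * ‖u‖ ^ 2 ≤ Q l p u := by
  have hP : normP l p u ^ 2 ≤ L ^ 2 * normL l p u ^ 2 := by
    rw [← mul_pow]; exact pow_le_pow_left₀ (Real.sqrt_nonneg _) hu 2
  rw [Q_eq_normL_sq_sub_normP_sq, norm_sq_eq_normL_sq_add_normP_sq]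
  have hL3 : 0 ≤ 3 - L ^ 2 := by nlinarith
  nlinarith [mul_le_mul_of_nonneg_left hP hL3,
    mul_nonneg (sq_nonneg (1 - L ^ 2)) (sq_nonneg (normL l p u))]

end PE

open PE

lemma PseudoLipschitz.exists_pos_mul_norm_sq_le_Q {l p : ℕ} {L : ℝ} {X : Set (PE l p)}
    (hlip : PseudoLipschitz l p L X) (hL : L < 1) :
    ∃ c > 0, ∀ x ∈ X, ∀ y ∈ X, c * ‖x - y‖ ^ 2 ≤ Q l p (x - y) := by
  have hL0 : 0 ≤ max L 0 := le_max_right _ _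
  have hL1 : max L 0 < 1 := max_lt hL one_pos
  refine ⟨(1 - max L 0 ^ 2) / 2, by nlinarith, fun x hx y hy => ?_⟩
  exact mul_norm_sq_le_Q_of_normP_le hL0 hL1.le <| (hlip x hx y hy).trans <|
    mul_le_mul_of_nonneg_right (le_max_left _ _) (Real.sqrt_nonneg _)

section Coercive

variable {l p : ℕ} {X : Set (PE l p)} {c : ℝ}
  (hc : ∀ x ∈ X, ∀ y ∈ X, c * ‖x - y‖ ^ 2 ≤ Q l p (x - y)) {x₀ : PE l p}
include hc

lemma le_Q_sub_of_coercive (hx₀ : x₀ ∈ X) {x : PE l p} (hx : x ∈ X) (a : PE l p) :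
    c * ‖x - x₀‖ ^ 2 - 2 * ‖x - x₀‖ * ‖x₀ - a‖ - ‖x₀ - a‖ ^ 2 ≤ Q l p (x - a) := by
  have hQ := (abs_le.mp (abs_Q_sub_Q_le (x - a) (x - x₀))).1
  have hxa : ‖x - a‖ ≤ ‖x - x₀‖ + ‖x₀ - a‖ := norm_sub_le_norm_sub_add_norm_sub _ _ _
  rw [sub_sub_sub_cancel_left] at hQ
  nlinarith [hc x hx x₀ hx₀, norm_nonneg (x₀ - a)]

lemma bddBelow_Q_sub_image_of_coercive (hc0 : 0 < c) (hx₀ : x₀ ∈ X) (a : PE l p) :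
    BddBelow ((fun x => Q l p (x - a)) '' X) := by
  refine ⟨-(‖x₀ - a‖ ^ 2 / c + ‖x₀ - a‖ ^ 2), ?_⟩
  rintro _ ⟨x, hx, rfl⟩
  have hsq : -‖x₀ - a‖ ^ 2 / c ≤ c * ‖x - x₀‖ ^ 2 - 2 * ‖x - x₀‖ * ‖x₀ - a‖ := by
    rw [div_le_iff₀ hc0]; nlinarith [sq_nonneg (c * ‖x - x₀‖ - ‖x₀ - a‖)]
  have := le_Q_sub_of_coercive hc hx₀ hx a
  rw [neg_div] at hsq
  linarith

/-- Points of `X` within `R = 4r/c + r` of `x₀` satisfy the estimate themselves; beyond `R`,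
coercivity gives `Q(x - b) ≥ r² ≥ Q(x₀ - a)`, so `x₀` does. -/
lemma exists_Q_sub_le_of_coercive (hc0 : 0 < c) (hx₀ : x₀ ∈ X) {r : ℝ} {a b : PE l p}
    (ha : ‖x₀ - a‖ ≤ r) (hb : ‖x₀ - b‖ ≤ r) {x : PE l p} (hx : x ∈ X) :
    ∃ y ∈ X, Q l p (y - a) ≤ Q l p (x - b) + 2 * (4 * r / c + 2 * r) * ‖a - b‖ := by
  set R := 4 * r / c + r
  have hr : 0 ≤ r := (norm_nonneg _).trans ha
  have hR : 0 ≤ 4 * r / c := div_nonneg (by linarith) hc0.le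
  by_cases hxR : ‖x - x₀‖ ≤ R
  · refine ⟨x, hx, ?_⟩
    have hQ := (abs_le.mp (abs_Q_sub_Q_le (x - a) (x - b))).2
    have hxa := norm_sub_le_norm_sub_add_norm_sub x x₀ a
    have hxb := norm_sub_le_norm_sub_add_norm_sub x x₀ b
    rw [sub_sub_sub_cancel_left, norm_sub_rev b a] at hQ
    nlinarith [norm_nonneg (a - b)]
  · refine ⟨x₀, hx₀, ?_⟩
    rw [not_le] at hxR
    have hcR : 4 * r ≤ c * ‖x - x₀‖ := by
      rw [← div_le_iff₀' hc0]; linarith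
    have hfar : r ^ 2 ≤ Q l p (x - b) := by
      nlinarith [le_Q_sub_of_coercive hc hx₀ hx b, norm_nonneg (x₀ - b)]
    have hK := mul_nonneg (by linarith : 0 ≤ 2 * (4 * r / c + 2 * r)) (norm_nonneg (a - b))
    linarith [(abs_le.mp (abs_Q_le (x₀ - a))).2, pow_le_pow_left₀ (norm_nonneg _) ha 2]

end Coercive

theorem rho_locallyLipschitz_general (l p : ℕ) (L : ℝ) (hL : L < 1)
    (X : Set (PE l p)) (hne : X.Nonempty)
    (hlip : PseudoLipschitz l p L X) :
    LocallyLipschitz (rho l p X) := by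
  intro a₀
  obtain ⟨x₀, hx₀⟩ := hne
  obtain ⟨c, hc0, hc⟩ := hlip.exists_pos_mul_norm_sq_le_Q hL
  obtain ⟨r, hr0, hr⟩ : ∃ r, 0 ≤ r ∧ ∀ a ∈ Metric.ball a₀ 1, ‖x₀ - a‖ ≤ r := by
    refine ⟨‖x₀ - a₀‖ + 1, by positivity, fun a ha => ?_⟩
    rw [Metric.mem_ball', dist_eq_norm] at ha
    linarith [norm_sub_le_norm_sub_add_norm_sub x₀ a₀ a]
  have hK : 0 ≤ 2 * (4 * r / c + 2 * r) := by
    have := div_nonneg (mul_nonneg zero_le_four hr0) hc0.le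
    linarith
  refine ⟨(2 * (4 * r / c + 2 * r)).toNNReal, Metric.ball a₀ 1,
    Metric.ball_mem_nhds a₀ one_pos, ?_⟩
  refine lipschitzOnWith_sInf_image ⟨x₀, hx₀⟩
    (fun a _ => bddBelow_Q_sub_image_of_coercive hc hc0 hx₀ a) fun a ha b hb x hx => ?_
  rw [Real.coe_toNNReal _ hK, dist_eq_norm]
  exact exists_Q_sub_le_of_coercive hc hc0 hx₀ (hr a ha) (hr b hb) hx

/-- For nonempty closed `L`-pseudo-Lipschitz `X` with `L < 1`, the
squared-distance function `ρ(·,X)` is locally Lipschitz on `ℝ^n`. -/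
theorem rho_locallyLipschitz (l p : ℕ) (hl : 1 ≤ l) (L : ℝ) (hL : L < 1)
    (X : Set (PE l p)) (hne : X.Nonempty) (hX : IsClosed X)
    (hlip : PseudoLipschitz l p L X) :
    LocallyLipschitz (rho l p X) :=
  rho_locallyLipschitz_general l p L hL X hne hlip
end
end

section
/- Let X be a closed 1-pseudo-Lipschitz subset of the pseudo-Euclidean space ℝ_{(l,p)}, let a ∈ X, and suppose X is C¹-regular of codimension k at a, i.e. there exist an open neighbourhood U of a in ℝ^n, an open set V ⊂ ℝ^{n−k}, a point t₀ ∈ V, and a C¹ map g : V → ℝ^n with g(t₀) = a, g a homeomorphism of V onto X ∩ U, and Dg(t₀) injective. If x₁, …, x_{k+1} ∈ ℝ^n are points with a ∈ m(x_i) for every i = 1,…,k+1, then the vectors x₁ − a, …, x_{k+1} − a are linearly dependent. -/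
/-!
Write `J = diag(1,…,1,-1,…,-1)`, so that `Q z = ⟪J z, z⟫`. If `a = g t₀` is a closest point of
`X` to `x`, then `t ↦ Q (g t - x)` has a local minimum at `t₀`, so its derivative
`2 ⟪J (a - x), Dg(t₀) ·⟫` vanishes: `J (x - a)` is orthogonal to the tangent space
`range Dg(t₀)`, whose dimension is `n - k`. The `k + 1` vectors `J (xᵢ - a)` thus lie in a space of
dimension `k`, and `J` is invertible.
-/

open Filter Topology Set

noncomputable section

open scoped RealInnerProductSpace

section FirstOrder

variable {E F : Type*} [NormedAddCommGroup E] [InnerProductSpace ℝ E]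
  [NormedAddCommGroup F] [NormedSpace ℝ F]

theorem LinearMap.IsSymmetric.hasFDerivAt_inner_self {J : E →L[ℝ] E}
    (hJ : (J : E →ₗ[ℝ] E).IsSymmetric) (y : E) :
    HasFDerivAt (fun z => ⟪J z, z⟫) ((2 : ℝ) • innerSL ℝ (J y)) y := by
  refine (J.hasFDerivAt.inner ℝ (hasFDerivAt_id y)).congr_fderiv
    (ContinuousLinearMap.ext fun v => ?_)
  have hsymm : ⟪J v, y⟫ = ⟪J y, v⟫ := by
    rw [← ContinuousLinearMap.coe_coe J, hJ v y, real_inner_comm]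
  simp only [ContinuousLinearMap.comp_apply, ContinuousLinearMap.prod_apply, id_eq,
    ContinuousLinearMap.id_apply, fderivInnerCLM_apply, _root_.smul_apply, coe_innerSL_apply,
    smul_eq_mul, hsymm]
  ring

theorem LinearMap.IsSymmetric.apply_sub_mem_orthogonal_range_of_isLocalMin {J : E →L[ℝ] E}
    (hJ : (J : E →ₗ[ℝ] E).IsSymmetric) {g : F → E} {D : F →L[ℝ] E} {t₀ : F} {x : E}
    (hg : HasFDerivAt g D t₀) (hmin : IsLocalMin (fun t => ⟪J (g t - x), g t - x⟫) t₀) :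
    J (g t₀ - x) ∈ (LinearMap.range (D : F →ₗ[ℝ] E))ᗮ := by
  have hzero := hmin.hasFDerivAt_eq_zero ((hJ.hasFDerivAt_inner_self _).comp t₀ (hg.sub_const x))
  rw [Submodule.mem_orthogonal]
  rintro _ ⟨v, rfl⟩
  have hv := congr($hzero v)
  simp only [ContinuousLinearMap.comp_apply, _root_.smul_apply, coe_innerSL_apply, smul_eq_mul,
    _root_.zero_apply, mul_eq_zero, two_ne_zero, false_or] at hv
  rw [ContinuousLinearMap.coe_coe, real_inner_comm, hv]

end FirstOrder

theorem LinearIndependent.card_add_finrank_le_of_mem_orthogonal {𝕜 E ι : Type*} [RCLike 𝕜]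
    [NormedAddCommGroup E] [InnerProductSpace 𝕜 E] [FiniteDimensional 𝕜 E] [Fintype ι]
    {v : ι → E} (hv : LinearIndependent 𝕜 v) {K : Submodule 𝕜 E} (hK : ∀ i, v i ∈ Kᗮ) :
    Fintype.card ι + Module.finrank 𝕜 K ≤ Module.finrank 𝕜 E := by
  have hcard := (LinearIndependent.of_comp Kᗮ.subtype
    (v := fun i => (⟨v i, hK i⟩ : Kᗮ)) hv).fintype_card_le_finrank
  have hsum := K.finrank_add_finrank_orthogonal
  omega

section PseudoEuclidean

variable (l p : ℕ)

def signature : PE l p →L[ℝ] PE l p :=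
  LinearMap.toContinuousLinearMap
    { toFun := fun z => WithLp.toLp 2 fun i => if (i : ℕ) < l then z i else -z i
      map_add' := fun u v => by ext i; simp only [PiLp.add_apply]; split <;> ring
      map_smul' := fun c u => by
        ext i; simp only [PiLp.smul_apply, smul_eq_mul, RingHom.id_apply]; split <;> ring }

theorem signature_apply (z : PE l p) (i : Fin (l + p)) :
    signature l p z i = if (i : ℕ) < l then z i else -z i :=
  rfl

theorem signature_involutive : Function.Involutive (signature l p) := by
  intro z; ext i; by_cases h : (i : ℕ) < l <;> simp [signature_apply, h]

theorem signature_isSymmetric : (signature l p : PE l p →ₗ[ℝ] PE l p).IsSymmetric := by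
  intro u v
  simp only [ContinuousLinearMap.coe_coe, PiLp.inner_apply, RCLike.inner_apply, conj_trivial,
    signature_apply]
  refine Finset.sum_congr rfl fun i _ => ?_
  split <;> ring

theorem Q_eq_inner_signature (z : PE l p) : Q l p z = ⟪signature l p z, z⟫ := by
  simp only [Q, PiLp.inner_apply, RCLike.inner_apply, conj_trivial, signature_apply]
  refine Finset.sum_congr rfl fun i _ => ?_
  split <;> ring

variable {l p}

theorem signature_sub_mem_orthogonal_range_of_mem_mm {F : Type*} [NormedAddCommGroup F]
    [NormedSpace ℝ F] {X : Set (PE l p)} {g : F → PE l p} {D : F →L[ℝ] PE l p} {t₀ : F}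
    {y : PE l p} (hg : HasFDerivAt g D t₀) (hgX : ∀ᶠ t in 𝓝 t₀, g t ∈ X)
    (hy : g t₀ ∈ mm l p X y) :
    signature l p (y - g t₀) ∈ (LinearMap.range (D : F →ₗ[ℝ] PE l p))ᗮ := by
  have hmin : IsLocalMin (fun t => ⟪signature l p (g t - y), g t - y⟫) t₀ :=
    hgX.mono fun t ht => by simpa only [Q_eq_inner_signature] using hy.2 (g t) ht
  rw [← neg_sub, map_neg, Submodule.neg_mem_iff]
  exact (signature_isSymmetric l p).apply_sub_mem_orthogonal_range_of_isLocalMin hg hmin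

end PseudoEuclidean

theorem closestPoint_directions_linearDependent_general (l p k : ℕ)
    (X : Set (PE l p)) (a : PE l p) (U : Set (PE l p))
    (V : Set (EuclideanSpace ℝ (Fin (l + p - k)))) (hV : IsOpen V)
    (t₀ : EuclideanSpace ℝ (Fin (l + p - k))) (ht₀ : t₀ ∈ V)
    (g : EuclideanSpace ℝ (Fin (l + p - k)) → PE l p)
    (hg : ContDiffOn ℝ 1 g V) (hgt₀ : g t₀ = a)
    (hgV : g '' V = X ∩ U)
    (hDg : Function.Injective ⇑(fderiv ℝ g t₀))
    (x : Fin (k + 1) → PE l p) (hx : ∀ i, a ∈ mm l p X (x i)) :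
    ¬ LinearIndependent ℝ (fun i => x i - a) := by
  intro hLI
  set D := fderiv ℝ g t₀
  have hgD : HasFDerivAt g D t₀ :=
    ((hg.contDiffAt (hV.mem_nhds ht₀)).differentiableAt one_ne_zero).hasFDerivAt
  have hgX : ∀ᶠ t in 𝓝 t₀, g t ∈ X :=
    mem_of_superset (hV.mem_nhds ht₀) fun t ht => (hgV ▸ mem_image_of_mem g ht).1
  have hperp i : signature l p (x i - a) ∈ (LinearMap.range D.toLinearMap)ᗮ := by
    simpa only [hgt₀] using signature_sub_mem_orthogonal_range_of_mem_mm hgD hgX (hgt₀ ▸ hx i)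
  have hsigLI := hLI.map' (signature l p).toLinearMap
    (LinearMap.ker_eq_bot.mpr (signature_involutive l p).injective)
  have hcard := hsigLI.card_add_finrank_le_of_mem_orthogonal hperp
  rw [Fintype.card_fin, LinearMap.finrank_range_of_inj hDg, finrank_euclideanSpace_fin,
    finrank_euclideanSpace_fin] at hcard
  -- `k + 1 + (l + p - k) ≤ l + p` fails also when `k > l + p` and the subtraction truncates
  omega

/-- Let `X` be a closed `1`-pseudo-Lipschitz subset of `ℝ_{(l,p)}`, `a ∈ X`,
and suppose `X` is `C¹`-regular of codimension `k` at `a` (a `C¹` parametrisation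
`g : V → ℝ^n`, `V ⊂ ℝ^{n−k}` open, `g t₀ = a`, `g` a homeomorphism of `V` onto `X ∩ U` with
continuous inverse `ginv`, `Dg(t₀)` injective). If `x₁, …, x_{k+1}` satisfy `a ∈ m(x_i)` for
all `i`, then the vectors `x_i − a` are linearly dependent. -/
theorem closestPoint_directions_linearDependent (l p k : ℕ) (hl : 1 ≤ l)
    (hk1 : 1 ≤ k) (hk2 : k ≤ l + p)
    (X : Set (PE l p)) (hX : IsClosed X) (hlip : PseudoLipschitz l p 1 X)
    (a : PE l p) (ha : a ∈ X)
    (U : Set (PE l p)) (hU : IsOpen U) (haU : a ∈ U)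
    (V : Set (EuclideanSpace ℝ (Fin (l + p - k)))) (hV : IsOpen V)
    (t₀ : EuclideanSpace ℝ (Fin (l + p - k))) (ht₀ : t₀ ∈ V)
    (g : EuclideanSpace ℝ (Fin (l + p - k)) → PE l p)
    (hg : ContDiffOn ℝ 1 g V) (hgt₀ : g t₀ = a)
    (hgV : g '' V = X ∩ U)
    (ginv : PE l p → EuclideanSpace ℝ (Fin (l + p - k)))
    (hginv : ContinuousOn ginv (X ∩ U)) (hinv : ∀ t ∈ V, ginv (g t) = t)
    (hDg : Function.Injective ⇑(fderiv ℝ g t₀))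
    (x : Fin (k + 1) → PE l p) (hx : ∀ i, a ∈ mm l p X (x i)) :
    ¬ LinearIndependent ℝ (fun i => x i - a) :=
  closestPoint_directions_linearDependent_general l p k X a U V hV t₀ ht₀ g hg hgt₀ hgV hDg x hx
end
end
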